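/- arXiv:2303.06419 — 7 statements merged into one kernel-verified Lean document; each statement's English description precedes it below -/
import Mathlib

section
/- Let α > 0, β > 0, and let x₁, x₂, a, b be real numbers; set d₁ = (x₁ − a)²/2 and d₂ = (x₂ − b)²/2. Then ∫₀^∞ ∫₀^∞ t·(x₂ − b) · exp(−s·d₁ − t·d₂) · (β^α/Γ(α)) s^{α−1} e^{−β s} · (β^α/Γ(α)) t^{α−1} e^{−β t} ds dt = (β/(β+d₁))^α · (α(x₂ − b)/(β + d₂)) · (β/(β+d₂))^α. -/
open MeasureTheory

/-- Gamma-marginalized gradient-observation kernel term: with `d₁ = (x₁ − a)²/2`,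
`d₂ = (x₂ − b)²/2`,
`∫₀^∞ ∫₀^∞ t (x₂ − b) exp(−s d₁ − t d₂) γ_{α,β}(s) γ_{α,β}(t) ds dt
  = (β/(β+d₁))^α · (α(x₂ − b)/(β + d₂)) · (β/(β+d₂))^α`. -/
theorem gamma_marginalized_grad_kernel (α β x₁ x₂ a b : ℝ) (hα : 0 < α) (hβ : 0 < β) :
    (∫ t in Set.Ioi (0 : ℝ), ∫ s in Set.Ioi (0 : ℝ),
        t * (x₂ - b) * Real.exp (-(s * ((x₁ - a) ^ 2 / 2)) - t * ((x₂ - b) ^ 2 / 2))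
          * ((β ^ α / Real.Gamma α) * s ^ (α - 1) * Real.exp (-β * s))
          * ((β ^ α / Real.Gamma α) * t ^ (α - 1) * Real.exp (-β * t)))
      = (β / (β + (x₁ - a) ^ 2 / 2)) ^ α * (α * (x₂ - b) / (β + (x₂ - b) ^ 2 / 2))
          * (β / (β + (x₂ - b) ^ 2 / 2)) ^ α := by
  set d₁ : ℝ := (x₁ - a) ^ 2 / 2 with hd1def
  set d₂ : ℝ := (x₂ - b) ^ 2 / 2 with hd2def
  set K : ℝ := β ^ α / Real.Gamma α with hKdef
  have hd₁ : 0 ≤ d₁ := by positivity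
  have hd₂ : 0 ≤ d₂ := by positivity
  have h1 : 0 < β + d₁ := by linarith
  have h2 : 0 < β + d₂ := by linarith
  have hΓ : 0 < Real.Gamma α := Real.Gamma_pos_of_pos hα
  -- inner integral
  have inner : ∀ t : ℝ,
      (∫ s in Set.Ioi (0 : ℝ),
        t * (x₂ - b) * Real.exp (-(s * d₁) - t * d₂)
          * (K * s ^ (α - 1) * Real.exp (-β * s))
          * (K * t ^ (α - 1) * Real.exp (-β * t)))
      = (t * (x₂ - b) * Real.exp (-(t * d₂)) * K * (K * t ^ (α - 1) * Real.exp (-β * t)))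
          * ((1 / (β + d₁)) ^ α * Real.Gamma α) := by
    intro t
    have hpt : ∀ s : ℝ,
        t * (x₂ - b) * Real.exp (-(s * d₁) - t * d₂)
          * (K * s ^ (α - 1) * Real.exp (-β * s))
          * (K * t ^ (α - 1) * Real.exp (-β * t))
        = (t * (x₂ - b) * Real.exp (-(t * d₂)) * K * (K * t ^ (α - 1) * Real.exp (-β * t)))
            * (s ^ (α - 1) * Real.exp (-((β + d₁) * s))) := by
      intro s
      have hexp : Real.exp (-(s * d₁) - t * d₂) * Real.exp (-β * s)
          = Real.exp (-(t * d₂)) * Real.exp (-((β + d₁) * s)) := by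
        rw [← Real.exp_add, ← Real.exp_add]; congr 1; ring
      linear_combination
        (t * (x₂ - b) * K * s ^ (α - 1) * (K * t ^ (α - 1) * Real.exp (-β * t))) * hexp
    rw [setIntegral_congr_fun measurableSet_Ioi (fun s _ => hpt s),
      MeasureTheory.integral_const_mul,
      Real.integral_rpow_mul_exp_neg_mul_Ioi hα h1]
  simp_rw [inner]
  -- outer integrand rewrite on Ioi 0
  have hout : ∀ t ∈ Set.Ioi (0 : ℝ),
      (t * (x₂ - b) * Real.exp (-(t * d₂)) * K * (K * t ^ (α - 1) * Real.exp (-β * t)))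
          * ((1 / (β + d₁)) ^ α * Real.Gamma α)
      = ((x₂ - b) * K * K * (1 / (β + d₁)) ^ α * Real.Gamma α)
          * (t ^ (α + 1 - 1) * Real.exp (-((β + d₂) * t))) := by
    intro t ht
    have ht' : (0 : ℝ) < t := ht
    have hexp : Real.exp (-(t * d₂)) * Real.exp (-β * t) = Real.exp (-((β + d₂) * t)) := by
      rw [← Real.exp_add]; congr 1; ring
    have hpow : t * t ^ (α - 1) = t ^ (α + 1 - 1) := by
      rw [show α + 1 - 1 = (α - 1) + 1 by ring, Real.rpow_add ht', Real.rpow_one]; ring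
    calc t * (x₂ - b) * Real.exp (-(t * d₂)) * K * (K * t ^ (α - 1) * Real.exp (-β * t))
          * ((1 / (β + d₁)) ^ α * Real.Gamma α)
        = ((x₂ - b) * K * K * (1 / (β + d₁)) ^ α * Real.Gamma α)
            * ((t * t ^ (α - 1)) * (Real.exp (-(t * d₂)) * Real.exp (-β * t))) := by ring
      _ = _ := by rw [hexp, hpow]
  rw [setIntegral_congr_fun measurableSet_Ioi hout, MeasureTheory.integral_const_mul,
    Real.integral_rpow_mul_exp_neg_mul_Ioi (by linarith : (0:ℝ) < α + 1) h2,
    Real.Gamma_add_one hα.ne']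
  -- final algebra
  rw [Real.div_rpow hβ.le h1.le, Real.div_rpow hβ.le h2.le, one_div, one_div,
    Real.inv_rpow h1.le, Real.inv_rpow h2.le,
    show α + 1 = α + 1 by rfl, Real.rpow_add h2 α 1, Real.rpow_one]
  have hp1 : (β + d₁) ^ α ≠ 0 := (Real.rpow_pos_of_pos h1 α).ne'
  have hp2 : (β + d₂) ^ α ≠ 0 := (Real.rpow_pos_of_pos h2 α).ne'
  have hΓ' : Real.Gamma α ≠ 0 := hΓ.ne'
  field_simp [hKdef]
  have hK : K * Real.Gamma α = β ^ α := by rw [hKdef]; exact div_mul_cancel₀ _ hΓ'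
  linear_combination (x₂ - b) * (K * Real.Gamma α + β ^ α) * hK
end

section
/- Let α > 0, β > 0, N ≥ 1, let (x₁⁽ⁿ⁾, x₂⁽ⁿ⁾) ∈ ℝ² for n = 1,…,N be training points, let ỹ ∈ ℝ^{2N}, and let (x₁, x₂) ∈ ℝ². Set d₁ₙ = (x₁ − x₁⁽ⁿ⁾)²/2 and d₂ₙ = (x₂ − x₂⁽ⁿ⁾)²/2. Then ∫₀^∞ ∫₀^∞ [ Σₙ₌₁^N ( ỹₙ + t(x₂ − x₂⁽ⁿ⁾) ỹₙ₊ₙ ) exp(−s d₁ₙ − t d₂ₙ) ] · (β^α/Γ(α)) s^{α−1} e^{−β s} · (β^α/Γ(α)) t^{α−1} e^{−β t} ds dt = Σₙ₌₁^N (1/(1 + d₁ₙ/β))^α (1/(1 + d₂ₙ/β))^α [ ỹₙ + (α/β)(x₂ − x₂⁽ⁿ⁾)/(1 + d₂ₙ/β) · ỹₙ₊ₙ ]. -/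
open MeasureTheory

lemma myIntegrableOn_rpow_exp {a r : ℝ} (ha : 0 < a) (hr : 0 < r) :
    MeasureTheory.IntegrableOn (fun t : ℝ => t ^ (a - 1) * Real.exp (-(r * t))) (Set.Ioi 0) := by
  have h := integrableOn_rpow_mul_exp_neg_mul_rpow (s := a - 1) (p := 1) (by linarith) zero_lt_one hr
  simpa [Real.rpow_one, neg_mul] using h

lemma gamma_marg_aux (α β : ℝ) (hα : 0 < α) (hβ : 0 < β) (N : ℕ)
    (A B c u v : ℕ → ℝ) (hA : ∀ n, 0 ≤ A n) (hB : ∀ n, 0 ≤ B n) :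
    (∫ t in Set.Ioi (0 : ℝ), ∫ s in Set.Ioi (0 : ℝ),
        (∑ n ∈ Finset.range N, (u n + t * c n * v n) * Real.exp (-(s * A n) - t * B n))
          * ((β ^ α / Real.Gamma α) * s ^ (α - 1) * Real.exp (-β * s))
          * ((β ^ α / Real.Gamma α) * t ^ (α - 1) * Real.exp (-β * t)))
      = ∑ n ∈ Finset.range N,
          (1 / (1 + A n / β)) ^ α * (1 / (1 + B n / β)) ^ α
            * (u n + (α / β) * c n / (1 + B n / β) * v n) := by
  have hΓ : 0 < Real.Gamma α := Real.Gamma_pos_of_pos hα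
  set C : ℝ := β ^ α / Real.Gamma α with hC
  have hβA : ∀ n, 0 < β + A n := fun n => by linarith [hA n]
  have hβB : ∀ n, 0 < β + B n := fun n => by linarith [hB n]
  have inner_eq : ∀ t : ℝ,
      (∫ s in Set.Ioi (0 : ℝ),
        (∑ n ∈ Finset.range N, (u n + t * c n * v n) * Real.exp (-(s * A n) - t * B n))
          * (C * s ^ (α - 1) * Real.exp (-β * s)) * (C * t ^ (α - 1) * Real.exp (-β * t)))
      = ∑ n ∈ Finset.range N,
          ((u n + t * c n * v n) * Real.exp (-(B n * t)) * C
            * (C * t ^ (α - 1) * Real.exp (-β * t)) * ((1 / (β + A n)) ^ α * Real.Gamma α)) := by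
    intro t
    have hfun : (fun s : ℝ =>
        (∑ n ∈ Finset.range N, (u n + t * c n * v n) * Real.exp (-(s * A n) - t * B n))
          * (C * s ^ (α - 1) * Real.exp (-β * s)) * (C * t ^ (α - 1) * Real.exp (-β * t)))
        = fun s : ℝ => ∑ n ∈ Finset.range N,
            ((u n + t * c n * v n) * Real.exp (-(B n * t)) * C
              * (C * t ^ (α - 1) * Real.exp (-β * t)))
              * (s ^ (α - 1) * Real.exp (-((β + A n) * s))) := by
      funext s
      rw [Finset.sum_mul, Finset.sum_mul]
      refine Finset.sum_congr rfl fun n _ => ?_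
      have he : Real.exp (-(s * A n) - t * B n) * Real.exp (-β * s)
          = Real.exp (-(B n * t)) * Real.exp (-((β + A n) * s)) := by
        rw [← Real.exp_add, ← Real.exp_add]; congr 1; ring
      linear_combination ((u n + t * c n * v n) * C * (C * t ^ (α - 1) * Real.exp (-β * t))
        * s ^ (α - 1)) * he
    rw [hfun, MeasureTheory.integral_finset_sum]
    · refine Finset.sum_congr rfl fun n _ => ?_
      rw [integral_const_mul,
        Real.integral_rpow_mul_exp_neg_mul_Ioi hα (hβA n)]
    · intro n _
      exact (myIntegrableOn_rpow_exp hα (hβA n)).const_mul _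
  simp only [inner_eq]
  have step2 : (∫ t in Set.Ioi (0 : ℝ), ∑ n ∈ Finset.range N,
          ((u n + t * c n * v n) * Real.exp (-(B n * t)) * C
            * (C * t ^ (α - 1) * Real.exp (-β * t)) * ((1 / (β + A n)) ^ α * Real.Gamma α)))
      = ∫ t in Set.Ioi (0 : ℝ), ∑ n ∈ Finset.range N,
          ((u n * C * C * ((1 / (β + A n)) ^ α * Real.Gamma α))
              * (t ^ (α - 1) * Real.exp (-((β + B n) * t)))
            + (c n * v n * C * C * ((1 / (β + A n)) ^ α * Real.Gamma α))
              * (t ^ (α + 1 - 1) * Real.exp (-((β + B n) * t)))) := by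
    refine setIntegral_congr_fun measurableSet_Ioi fun t ht => ?_
    refine Finset.sum_congr rfl fun n _ => ?_
    have h1 : t ^ (α + 1 - 1) = t ^ (α - 1) * t := by
      rw [show α + 1 - 1 = (α - 1) + 1 by ring, Real.rpow_add_one (ne_of_gt ht)]
    have h2 : Real.exp (-(B n * t)) * Real.exp (-β * t) = Real.exp (-((β + B n) * t)) := by
      rw [← Real.exp_add]; congr 1; ring
    rw [h1]
    linear_combination ((u n + t * c n * v n) * C * C * ((1 / (β + A n)) ^ α * Real.Gamma α)
      * t ^ (α - 1)) * h2
  rw [step2, MeasureTheory.integral_finset_sum]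
  · refine Finset.sum_congr rfl fun n _ => ?_
    rw [MeasureTheory.integral_add
        ((myIntegrableOn_rpow_exp hα (hβB n)).const_mul _)
        ((myIntegrableOn_rpow_exp (by linarith : (0:ℝ) < α + 1) (hβB n)).const_mul _),
      integral_const_mul, integral_const_mul,
      Real.integral_rpow_mul_exp_neg_mul_Ioi hα (hβB n),
      Real.integral_rpow_mul_exp_neg_mul_Ioi (by linarith : (0:ℝ) < α + 1) (hβB n)]
    have hg1 : Real.Gamma (α + 1) = α * Real.Gamma α := Real.Gamma_add_one hα.ne'
    have hr1 : ((1:ℝ) / (1 + A n / β)) ^ α = β ^ α * (1 / (β + A n)) ^ α := by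
      rw [show (1:ℝ) / (1 + A n / β) = β * (1 / (β + A n)) by
        field_simp, Real.mul_rpow hβ.le (one_div_nonneg.mpr (hβA n).le)]
    have hr2 : ((1:ℝ) / (1 + B n / β)) ^ α = β ^ α * (1 / (β + B n)) ^ α := by
      rw [show (1:ℝ) / (1 + B n / β) = β * (1 / (β + B n)) by
        field_simp, Real.mul_rpow hβ.le (one_div_nonneg.mpr (hβB n).le)]
    have hr3 : ((1:ℝ) / (β + B n)) ^ (α + 1) = (1 / (β + B n)) ^ α * (1 / (β + B n)) :=
      Real.rpow_add_one (one_div_ne_zero (hβB n).ne') α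
    have hP : ((1:ℝ) / (β + A n)) ^ α = ((β + A n) ^ α)⁻¹ := by
      rw [Real.div_rpow zero_le_one (hβA n).le, Real.one_rpow, one_div]
    have hQ : ((1:ℝ) / (β + B n)) ^ α = ((β + B n) ^ α)⁻¹ := by
      rw [Real.div_rpow zero_le_one (hβB n).le, Real.one_rpow, one_div]
    rw [hg1, hr1, hr2, hr3, hP, hQ]
    have hGG : Real.Gamma α ^ 2 * (Real.Gamma α)⁻¹ ^ 2 = 1 := by
      rw [← mul_pow, mul_inv_cancel₀ hΓ.ne', one_pow]
    field_simp [hΓ.ne', (Real.rpow_pos_of_pos (hβA n) α).ne',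
      (Real.rpow_pos_of_pos (hβB n) α).ne', (hβB n).ne']
    linear_combination ((β ^ α) ^ 2 * (u n * β + u n * B n + c n * v n * α)) * hGG
  · intro n _
    exact ((myIntegrableOn_rpow_exp hα (hβB n)).const_mul _).add
      ((myIntegrableOn_rpow_exp (by linarith : (0:ℝ) < α + 1) (hβB n)).const_mul _)

/-- Closed form of the hyperparameter-marginalized posterior mean (Theorem 1 of the paper):
with training points `(x₁ⁿ, x₂ⁿ)`, combined observations `ty : ℕ → ℝ` (where `ty n` is `ỹₙ`
and `ty (n + N)` is `ỹ_{n+N}`), query `(x₁, x₂)`, `d₁ₙ = (x₁ − x₁ⁿ)²/2`, `d₂ₙ = (x₂ − x₂ⁿ)²/2`,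
the double Gamma-marginalized kernel sum equals the displayed closed form. -/
theorem gamma_marginalized_posterior_mean (α β : ℝ) (hα : 0 < α) (hβ : 0 < β)
    (N : ℕ) (hN : 1 ≤ N) (x1 x2 ty : ℕ → ℝ) (x₁ x₂ : ℝ) :
    (∫ t in Set.Ioi (0 : ℝ), ∫ s in Set.Ioi (0 : ℝ),
        (∑ n ∈ Finset.range N,
            (ty n + t * (x₂ - x2 n) * ty (n + N))
              * Real.exp (-(s * ((x₁ - x1 n) ^ 2 / 2)) - t * ((x₂ - x2 n) ^ 2 / 2)))
          * ((β ^ α / Real.Gamma α) * s ^ (α - 1) * Real.exp (-β * s))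
          * ((β ^ α / Real.Gamma α) * t ^ (α - 1) * Real.exp (-β * t)))
      = ∑ n ∈ Finset.range N,
          (1 / (1 + (x₁ - x1 n) ^ 2 / 2 / β)) ^ α * (1 / (1 + (x₂ - x2 n) ^ 2 / 2 / β)) ^ α
            * (ty n + (α / β) * (x₂ - x2 n) / (1 + (x₂ - x2 n) ^ 2 / 2 / β) * ty (n + N)) := by
  exact gamma_marg_aux α β hα hβ N (fun n => (x₁ - x1 n) ^ 2 / 2)
    (fun n => (x₂ - x2 n) ^ 2 / 2) (fun n => x₂ - x2 n) ty (fun n => ty (n + N))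
    (fun n => by positivity) (fun n => by positivity)
end

section
/- For all real α ≥ 0, β > 0, d ≥ 0 and d′ ≥ 0, it holds that (β/(β+d′))^α − (β/(β+d))^α ≥ (β/(β+d))^α · α(d − d′)/(β + d). -/
/-- Bernoulli-type lower bound for the Gamma-marginalized kernel difference:
for `α ≥ 0`, `β > 0`, `d, d′ ≥ 0`,
`(β/(β+d′))^α − (β/(β+d))^α ≥ (β/(β+d))^α · α (d − d′)/(β + d)`. -/
theorem kernel_difference_bernoulli_bound (α β d d' : ℝ)
    (hα : 0 ≤ α) (hβ : 0 < β) (hd : 0 ≤ d) (hd' : 0 ≤ d') :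
    (β / (β + d')) ^ α - (β / (β + d)) ^ α
      ≥ (β / (β + d)) ^ α * (α * (d - d') / (β + d)) := by
  have hbd : 0 < β + d := by linarith
  have hbd' : 0 < β + d' := by linarith
  set t : ℝ := (β + d') / (β + d) with ht_def
  have ht : 0 < t := div_pos hbd' hbd
  have hB : 0 < (β / (β + d)) ^ α :=
    Real.rpow_pos_of_pos (div_pos hβ hbd) α
  -- key Bernoulli-type bound: t^(-α) ≥ 1 + α*(1-t)
  have hlog : Real.log t ≤ t - 1 := Real.log_le_sub_one_of_pos ht
  have hkey : 1 + α * (1 - t) ≤ t ^ (-α) := by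
    rw [Real.rpow_def_of_pos ht]
    have h1 : α * (1 - t) ≤ -α * Real.log t := by nlinarith
    have h2 := Real.add_one_le_exp (Real.log t * -α)
    nlinarith
  -- rewrite A as B * t^(-α)
  have hA : (β / (β + d')) ^ α = (β / (β + d)) ^ α * t ^ (-α) := by
    rw [Real.rpow_neg ht.le, ← Real.inv_rpow (by positivity),
      ← Real.mul_rpow (by positivity) (by positivity)]
    congr 1
    field_simp [ht_def]
    rw [ht_def]; field_simp <;> ring
  have hfrac : α * (d - d') / (β + d) = α * (1 - t) := by
    field_simp [ht_def]
    rw [ht_def]; field_simp <;> ring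
  rw [hA, hfrac, ge_iff_le]
  have : (β / (β + d)) ^ α * (α * (1 - t)) ≤ (β / (β + d)) ^ α * (t ^ (-α) - 1) :=
    mul_le_mul_of_nonneg_left (by linarith) hB.le
  linarith [this]
end

section
/- For all real α ≥ 0, β > 0, a ∈ ℝ and δ ∈ ℝ, it holds that (β/(β + (a+δ)²/2))^α − (β/(β + a²/2))^α ≥ −(β/(β + a²/2))^α · α δ (a + δ/2)/(β + a²/2). -/
/-- Bernoulli's inequality for nonpositive exponents:
for `t > -1` and `α ≥ 0`, `1 - α*t ≤ (1+t)^(-α)`. -/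
lemma bernoulli_neg_exp (α t : ℝ) (hα : 0 ≤ α) (ht : -1 < t) :
    1 - α * t ≤ (1 + t) ^ (-α) := by
  have h1t : (0:ℝ) < 1 + t := by linarith
  rcases le_or_gt 1 α with hα1 | hα1
  · -- use Bernoulli with u = -t/(1+t)
    have hu : -1 ≤ -t / (1 + t) := by
      rw [le_div_iff₀ h1t]; nlinarith
    have hb := one_add_mul_self_le_rpow_one_add hu hα1
    have key : (1 + -t / (1 + t)) ^ α = (1 + t) ^ (-α) := by
      have h : 1 + -t / (1 + t) = (1 + t)⁻¹ := by
        field_simp; ring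
      rw [h, Real.inv_rpow h1t.le, ← Real.rpow_neg h1t.le]
    have h2 : 1 + α * (-t / (1 + t)) ≥ 1 - α * t := by
      have hdt : -t ≤ -t / (1 + t) := by
        rw [le_div_iff₀ h1t]
        nlinarith [sq_nonneg t]
      nlinarith
    calc 1 - α * t ≤ 1 + α * (-t / (1 + t)) := h2
      _ ≤ (1 + -t / (1 + t)) ^ α := hb
      _ = (1 + t) ^ (-α) := key
  · rcases le_or_gt (1 - α * t) 0 with h | h
    · exact h.trans (Real.rpow_nonneg h1t.le _)
    · have hb := rpow_one_add_le_one_add_mul_self (le_of_lt ht) hα hα1.le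
      have hpos : (0:ℝ) < (1 + t) ^ α := Real.rpow_pos_of_pos h1t _
      have hkey : (1 - α * t) * (1 + t) ^ α ≤ 1 := by
        nlinarith [mul_le_mul_of_nonneg_left hb h.le, sq_nonneg (α * t)]
      calc 1 - α * t = (1 - α * t) * (1 + t) ^ α * ((1 + t) ^ α)⁻¹ := by
            field_simp
        _ ≤ 1 * ((1 + t) ^ α)⁻¹ :=
            mul_le_mul_of_nonneg_right hkey (by positivity)
        _ = (1 + t) ^ (-α) := by rw [Real.rpow_neg h1t.le, one_mul]

/-- Instantiation of the Bernoulli-based kernel difference bound with `a = x₂ − x₂ⁿ` and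
shift `δ`: `(β/(β + (a+δ)²/2))^α − (β/(β + a²/2))^α ≥ −(β/(β + a²/2))^α · αδ(a + δ/2)/(β + a²/2)`. -/
theorem kernel_shift_bernoulli_bound (α β a δ : ℝ) (hα : 0 ≤ α) (hβ : 0 < β) :
    (β / (β + (a + δ) ^ 2 / 2)) ^ α - (β / (β + a ^ 2 / 2)) ^ α
      ≥ -((β / (β + a ^ 2 / 2)) ^ α * (α * δ * (a + δ / 2) / (β + a ^ 2 / 2))) := by
  set D := β + a ^ 2 / 2 with hD
  set D' := β + (a + δ) ^ 2 / 2 with hD'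
  have hDpos : 0 < D := by positivity
  have hD'pos : 0 < D' := by positivity
  set t := (D' - D) / D with htdef
  have h1t : 1 + t = D' / D := by
    rw [htdef]; field_simp; ring
  have ht : -1 < t := by
    rw [htdef, lt_div_iff₀ hDpos]; nlinarith
  have key : (β / D') ^ α = (β / D) ^ α * (1 + t) ^ (-α) := by
    rw [h1t]
    have hsplit : β / D' = (β / D) * (D' / D)⁻¹ := by
      field_simp
    rw [hsplit, Real.mul_rpow (by positivity) (by positivity),
      ← Real.rpow_neg_one (D' / D), ← Real.rpow_mul (by positivity)]
    ring_nf
  have hterm : α * δ * (a + δ / 2) / D = α * t := by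
    rw [htdef, hD, hD']
    field_simp
    ring
  have hb := bernoulli_neg_exp α t hα ht
  have hy : 0 ≤ (β / D) ^ α := Real.rpow_nonneg (by positivity) _
  have h2 := mul_le_mul_of_nonneg_left hb hy
  rw [ge_iff_le, hterm, key]
  nlinarith [h2]
end

section
/- Let θ ≠ 0, δ ≥ 0, N ≥ 1, and let cₙ ≥ 0, aₙ, bₙ ∈ ℝ for n = 1,…,N. Fix (x₁, x₂) ∈ ℝ² with |x₂ − bₙ| ≤ δ for all n, and let f(x₁, x₂) = Σₙ₌₁^N cₙ exp(−((x₁ − aₙ)² + (x₂ − bₙ)²)/(2θ²)). Then the partial derivative of f with respect to x₂ satisfies |∂f/∂x₂ (x₁, x₂)| ≤ (δ/θ²) · f(x₁, x₂). -/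
lemma term_hasDerivAt (θ A b : ℝ) (hθ : θ ≠ 0) (z : ℝ) :
    HasDerivAt (fun z : ℝ => Real.exp (-((A + (z - b) ^ 2) / (2 * θ ^ 2))))
      (Real.exp (-((A + (z - b) ^ 2) / (2 * θ ^ 2))) * (-((z - b) / θ ^ 2))) z := by
  have h1 : HasDerivAt (fun z : ℝ => -((A + (z - b) ^ 2) / (2 * θ ^ 2)))
      (-((z - b) / θ ^ 2)) z := by
    have h2 : HasDerivAt (fun z : ℝ => (z - b) ^ 2) (2 * (z - b)) z := by
      have := ((hasDerivAt_id z).sub_const b).fun_pow 2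
      simpa [mul_comm] using this
    have h3 : HasDerivAt (fun z : ℝ => A + (z - b) ^ 2) (2 * (z - b)) z :=
      (h2.const_add A)
    have h4 : HasDerivAt (fun z : ℝ => -((A + (z - b) ^ 2) / (2 * θ ^ 2)))
        (-(2 * (z - b) / (2 * θ ^ 2))) z := (h3.div_const (2 * θ ^ 2)).fun_neg
    convert h4 using 1
    ring
  simpa [mul_comm] using h1.exp

/-- Slope bound for the GP posterior mean: if every training point's second coordinate is
within `δ` of `x₂` and the combination weights `cₙ` are nonnegative, then
`|∂f/∂x₂ (x₁, x₂)| ≤ (δ/θ²) · f(x₁, x₂)`. -/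
theorem gp_mean_slope_bound (θ δ : ℝ) (hθ : θ ≠ 0) (hδ : 0 ≤ δ)
    (N : ℕ) (hN : 1 ≤ N) (c a b : ℕ → ℝ)
    (hc : ∀ n ∈ Finset.range N, 0 ≤ c n)
    (x₁ x₂ : ℝ) (hx : ∀ n ∈ Finset.range N, |x₂ - b n| ≤ δ) :
    |deriv (fun z : ℝ => ∑ n ∈ Finset.range N,
        c n * Real.exp (-(((x₁ - a n) ^ 2 + (z - b n) ^ 2) / (2 * θ ^ 2)))) x₂|
      ≤ (δ / θ ^ 2)
        * ∑ n ∈ Finset.range N,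
            c n * Real.exp (-(((x₁ - a n) ^ 2 + (x₂ - b n) ^ 2) / (2 * θ ^ 2))) := by
  have hD : HasDerivAt (fun z : ℝ => ∑ n ∈ Finset.range N,
        c n * Real.exp (-(((x₁ - a n) ^ 2 + (z - b n) ^ 2) / (2 * θ ^ 2))))
      (∑ n ∈ Finset.range N,
        c n * (Real.exp (-(((x₁ - a n) ^ 2 + (x₂ - b n) ^ 2) / (2 * θ ^ 2)))
          * (-((x₂ - b n) / θ ^ 2)))) x₂ := by
    apply HasDerivAt.fun_sum
    intro n _
    exact (term_hasDerivAt θ ((x₁ - a n) ^ 2) (b n) hθ x₂).const_mul (c n)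
  rw [hD.deriv]
  calc |∑ n ∈ Finset.range N,
        c n * (Real.exp (-(((x₁ - a n) ^ 2 + (x₂ - b n) ^ 2) / (2 * θ ^ 2)))
          * (-((x₂ - b n) / θ ^ 2)))|
      ≤ ∑ n ∈ Finset.range N,
        |c n * (Real.exp (-(((x₁ - a n) ^ 2 + (x₂ - b n) ^ 2) / (2 * θ ^ 2)))
          * (-((x₂ - b n) / θ ^ 2)))| := Finset.abs_sum_le_sum_abs _ _
    _ ≤ ∑ n ∈ Finset.range N, (δ / θ ^ 2) *
        (c n * Real.exp (-(((x₁ - a n) ^ 2 + (x₂ - b n) ^ 2) / (2 * θ ^ 2)))) := by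
        apply Finset.sum_le_sum
        intro n hn
        have hcn := hc n hn
        have hxn := hx n hn
        have hθ2 : (0:ℝ) < θ ^ 2 := by positivity
        rw [abs_mul, abs_mul, abs_neg, abs_div, abs_of_nonneg hcn,
          abs_of_nonneg (Real.exp_nonneg _), abs_of_nonneg hθ2.le]
        have h1 : |x₂ - b n| / θ ^ 2 ≤ δ / θ ^ 2 := by gcongr
        calc c n * (Real.exp _ * (|x₂ - b n| / θ ^ 2))
            ≤ c n * (Real.exp (-(((x₁ - a n) ^ 2 + (x₂ - b n) ^ 2) / (2 * θ ^ 2))) * (δ / θ ^ 2)) := by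
              apply mul_le_mul_of_nonneg_left _ hcn
              exact mul_le_mul_of_nonneg_left h1 (Real.exp_nonneg _)
          _ = (δ / θ ^ 2) * (c n * Real.exp _) := by ring
    _ = (δ / θ ^ 2) * ∑ n ∈ Finset.range N,
          c n * Real.exp (-(((x₁ - a n) ^ 2 + (x₂ - b n) ^ 2) / (2 * θ ^ 2))) := by
        rw [Finset.mul_sum]
end

section
/- Let θ ≠ 0, δ ≥ 0, N ≥ 1, and let cₙ ≥ 0, aₙ, bₙ ∈ ℝ for n = 1,…,N. Define f(x₁, x₂) = Σₙ₌₁^N cₙ exp(−((x₁ − aₙ)² + (x₂ − bₙ)²)/(2θ²)). Fix x₁, x₂, h ∈ ℝ and suppose that for every x₂′ in the closed interval with endpoints x₂ and x₂ + h, and every n, |x₂′ − bₙ| ≤ δ. Then |f(x₁, x₂ + h) − f(x₁, x₂)| ≤ (δ/θ²) · (Σₙ₌₁^N cₙ) · |h|. -/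
lemma gp_term_bound (θ δ A B : ℝ) (hθ : θ ≠ 0) (hδ : 0 ≤ δ) (hA : 0 ≤ A) (x₂ h : ℝ)
    (hx : ∀ y ∈ Set.uIcc x₂ (x₂ + h), |y - B| ≤ δ) :
    |Real.exp (-((A + (x₂ + h - B) ^ 2) / (2 * θ ^ 2)))
      - Real.exp (-((A + (x₂ - B) ^ 2) / (2 * θ ^ 2)))| ≤ (δ / θ ^ 2) * |h| := by
  set g : ℝ → ℝ := fun y => Real.exp (-((A + (y - B) ^ 2) / (2 * θ ^ 2))) with hg
  have hθ2 : (θ : ℝ) ^ 2 ≠ 0 := pow_ne_zero 2 hθ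
  have hderiv : ∀ y : ℝ, HasDerivAt g (-((y - B) / θ ^ 2) * g y) y := by
    intro y
    have h1 : HasDerivAt (fun y : ℝ => -((A + (y - B) ^ 2) / (2 * θ ^ 2)))
        (-((y - B) / θ ^ 2)) y := by
      have : HasDerivAt (fun y : ℝ => (y - B) ^ 2) (2 * (y - B)) y := by
        have := ((hasDerivAt_id y).sub_const B).fun_pow 2
        simpa [mul_comm] using this
      have := ((this.const_add A).div_const (2 * θ ^ 2)).fun_neg
      refine this.congr_deriv ?_
      rw [mul_div_mul_left (y - B) (θ ^ 2) (two_ne_zero' ℝ)]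
    simpa [hg, mul_comm] using h1.exp
  have hbound : ∀ y ∈ Set.uIcc x₂ (x₂ + h), ‖-((y - B) / θ ^ 2) * g y‖ ≤ δ / θ ^ 2 := by
    intro y hy
    have hgy : g y ≤ 1 := by
      rw [hg]
      apply Real.exp_le_one_iff.2
      rw [neg_nonpos]
      positivity
    have hgy0 : 0 < g y := Real.exp_pos _
    have h1 : |y - B| ≤ δ := hx y hy
    have : ‖-((y - B) / θ ^ 2) * g y‖ = |y - B| / θ ^ 2 * g y := by
      rw [Real.norm_eq_abs, abs_mul, abs_neg, abs_div, abs_of_pos hgy0, abs_of_nonneg (sq_nonneg θ)]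
    rw [this]
    calc |y - B| / θ ^ 2 * g y ≤ δ / θ ^ 2 * 1 := by
          apply mul_le_mul _ hgy hgy0.le (by positivity)
          exact div_le_div_of_nonneg_right h1 (by positivity) |>.trans_eq rfl
      _ = δ / θ ^ 2 := mul_one _
  have hconv : Convex ℝ (Set.uIcc x₂ (x₂ + h)) := convex_uIcc _ _
  have := hconv.norm_image_sub_le_of_norm_deriv_le
      (fun y _ => (hderiv y).differentiableAt)
      (fun y hy => by simpa [(hderiv y).deriv] using hbound y hy)
      Set.left_mem_uIcc Set.right_mem_uIcc
  simpa [Real.norm_eq_abs, abs_sub_comm, add_sub_cancel_left] using this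

/-- Deviation bound for the GP posterior mean under a perturbation of the second coordinate
(fixed-length-scale core of Theorem 2 of the paper): if every point on the segment from
`x₂` to `x₂ + h` has second coordinate within `δ` of every training point's second
coordinate, then `|f(x₁, x₂ + h) − f(x₁, x₂)| ≤ (δ/θ²) (Σₙ cₙ) |h|`. -/
theorem gp_mean_deviation_bound (θ δ : ℝ) (hθ : θ ≠ 0) (hδ : 0 ≤ δ)
    (N : ℕ) (hN : 1 ≤ N) (c a b : ℕ → ℝ)
    (hc : ∀ n ∈ Finset.range N, 0 ≤ c n)
    (x₁ x₂ h : ℝ)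
    (hx : ∀ x₂' ∈ Set.uIcc x₂ (x₂ + h), ∀ n ∈ Finset.range N, |x₂' - b n| ≤ δ) :
    |(∑ n ∈ Finset.range N,
        c n * Real.exp (-(((x₁ - a n) ^ 2 + (x₂ + h - b n) ^ 2) / (2 * θ ^ 2))))
      - ∑ n ∈ Finset.range N,
          c n * Real.exp (-(((x₁ - a n) ^ 2 + (x₂ - b n) ^ 2) / (2 * θ ^ 2)))|
      ≤ (δ / θ ^ 2) * (∑ n ∈ Finset.range N, c n) * |h| := by
  rw [← Finset.sum_sub_distrib]
  calc |∑ n ∈ Finset.range N,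
        (c n * Real.exp (-(((x₁ - a n) ^ 2 + (x₂ + h - b n) ^ 2) / (2 * θ ^ 2)))
          - c n * Real.exp (-(((x₁ - a n) ^ 2 + (x₂ - b n) ^ 2) / (2 * θ ^ 2))))|
      ≤ ∑ n ∈ Finset.range N, c n * ((δ / θ ^ 2) * |h|) := by
        refine (Finset.abs_sum_le_sum_abs _ _).trans (Finset.sum_le_sum ?_)
        intro n hn
        rw [← mul_sub, abs_mul, abs_of_nonneg (hc n hn)]
        exact mul_le_mul_of_nonneg_left
          (gp_term_bound θ δ ((x₁ - a n) ^ 2) (b n) hθ hδ (sq_nonneg _) x₂ h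
            (fun y hy => hx y hy n hn)) (hc n hn)
    _ = (δ / θ ^ 2) * (∑ n ∈ Finset.range N, c n) * |h| := by
        rw [← Finset.sum_mul]
        ring
end

section
/- Let α > 0, β > 0, δ ≥ 0, N ≥ 1, and let cₙ ≥ 0, x₁⁽ⁿ⁾, x₂⁽ⁿ⁾ ∈ ℝ for n = 1,…,N. Define G(x₁, x₂) = Σₙ₌₁^N cₙ (β/(β + dₙ))^α with dₙ = ((x₁ − x₁⁽ⁿ⁾)² + (x₂ − x₂⁽ⁿ⁾)²)/2. Fix x₁, x₂, h ∈ ℝ and suppose that for every x₂′ in the closed interval with endpoints x₂ and x₂ + h, and every n, |x₂′ − x₂⁽ⁿ⁾| ≤ δ. Then |G(x₁, x₂ + h) − G(x₁, x₂)| ≤ (α/β) · δ · (Σₙ₌₁^N cₙ) · |h|. -/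
/-! Marginalizing the inverse-squared length scale over `Gamma(α, β)` turns `exp (-t d)` into
`(β / (β + d)) ^ α`, whose derivative in `d` is `-α / (β + d)` times itself, hence at most `α / β`
in absolute value for `d ≥ 0`. With `d = (a + (t - b)²) / 2` the chain rule contributes the factor
`t - b`, and `|t - b| ≤ δ` on the segment, so the mean value theorem
bounds each kernel increment by `(α / β) δ |h|`, and the nonnegative weights sum these bounds. -/

open Set

noncomputable def marginalizedKernel (α β d : ℝ) : ℝ := (β / (β + d)) ^ α

section

variable {α β : ℝ}

lemma hasDerivAt_marginalizedKernel (hβ : β ≠ 0) {d : ℝ} (hd : β + d ≠ 0) :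
    HasDerivAt (marginalizedKernel α β) (-(α / (β + d)) * marginalizedKernel α β d) d := by
  have hquot : HasDerivAt (fun u => β / (β + u)) ((0 * (β + d) - β * 1) / (β + d) ^ 2) d :=
    (hasDerivAt_const d β).div ((hasDerivAt_id d).const_add β) hd
  refine (hquot.rpow_const (p := α) (Or.inl (div_ne_zero hβ hd))).congr_deriv ?_
  rw [marginalizedKernel, Real.rpow_sub_one (div_ne_zero hβ hd)]
  field_simp
  ring

lemma abs_neg_div_mul_marginalizedKernel_le (hα : 0 ≤ α) (hβ : 0 < β) {d : ℝ} (hd : 0 ≤ d) :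
    |-(α / (β + d)) * marginalizedKernel α β d| ≤ α / β := by
  have hβd : 0 < β + d := by linarith
  have hk₀ : 0 ≤ marginalizedKernel α β d := by unfold marginalizedKernel; positivity
  have hk₁ : marginalizedKernel α β d ≤ 1 :=
    Real.rpow_le_one (by positivity) ((div_le_one hβd).2 (by linarith)) hα
  rw [abs_mul, abs_neg, abs_of_nonneg (by positivity), abs_of_nonneg hk₀]
  calc α / (β + d) * marginalizedKernel α β d ≤ α / β * 1 := by
        gcongr
        linarith
    _ = α / β := mul_one _

lemma hasDerivAt_marginalizedKernel_halfSqDist (hβ : 0 < β) {a : ℝ} (ha : 0 ≤ a) (b t : ℝ) :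
    HasDerivAt (fun t => marginalizedKernel α β ((a + (t - b) ^ 2) / 2))
      (-(α / (β + (a + (t - b) ^ 2) / 2)) * marginalizedKernel α β ((a + (t - b) ^ 2) / 2)
        * (t - b)) t := by
  have hdist : HasDerivAt (fun t => (a + (t - b) ^ 2) / 2) (t - b) t := by
    have hsq : HasDerivAt (fun t => (t - b) ^ 2) (2 * (t - b) ^ 1 * 1) t :=
      ((hasDerivAt_id t).sub_const b).pow 2
    exact ((hsq.const_add a).div_const 2).congr_deriv (by ring)
  exact (hasDerivAt_marginalizedKernel hβ.ne' (by positivity)).comp t hdist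

lemma abs_marginalizedKernel_halfSqDist_sub_le (hα : 0 ≤ α) (hβ : 0 < β) {a b x h δ : ℝ}
    (ha : 0 ≤ a) (hx : ∀ t ∈ uIcc x (x + h), |t - b| ≤ δ) :
    |marginalizedKernel α β ((a + (x + h - b) ^ 2) / 2)
        - marginalizedKernel α β ((a + (x - b) ^ 2) / 2)| ≤ α / β * δ * |h| := by
  have hderiv_le : ∀ t ∈ uIcc x (x + h),
      ‖-(α / (β + (a + (t - b) ^ 2) / 2)) * marginalizedKernel α β ((a + (t - b) ^ 2) / 2)
        * (t - b)‖ ≤ α / β * δ := fun t ht => by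
    rw [Real.norm_eq_abs, abs_mul]
    exact mul_le_mul (abs_neg_div_mul_marginalizedKernel_le hα hβ (by positivity)) (hx t ht)
      (abs_nonneg _) (by positivity)
  simpa using (convex_uIcc x (x + h)).norm_image_sub_le_of_norm_hasDerivWithin_le
    (fun t _ => (hasDerivAt_marginalizedKernel_halfSqDist hβ ha b t).hasDerivWithinAt)
    hderiv_le left_mem_uIcc right_mem_uIcc

end

lemma abs_sum_mul_sub_sum_mul_le {ι : Type*} (s : Finset ι) {c f g : ι → ℝ} {L : ℝ}
    (hc : ∀ i ∈ s, 0 ≤ c i) (hfg : ∀ i ∈ s, |f i - g i| ≤ L) :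
    |∑ i ∈ s, c i * f i - ∑ i ∈ s, c i * g i| ≤ L * ∑ i ∈ s, c i := by
  rw [← Finset.sum_sub_distrib, Finset.mul_sum]
  refine (Finset.abs_sum_le_sum_abs _ _).trans (Finset.sum_le_sum fun i hi => ?_)
  rw [← mul_sub, abs_mul, abs_of_nonneg (hc i hi), mul_comm L]
  exact mul_le_mul_of_nonneg_left (hfg i hi) (hc i hi)

theorem marginalized_gp_mean_deviation_bound_general (α β δ : ℝ) (hα : 0 < α) (hβ : 0 < β)
    (N : ℕ) (c x1 x2 : ℕ → ℝ)
    (hc : ∀ n ∈ Finset.range N, 0 ≤ c n)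
    (x₁ x₂ h : ℝ)
    (hx : ∀ x₂' ∈ Set.uIcc x₂ (x₂ + h), ∀ n ∈ Finset.range N, |x₂' - x2 n| ≤ δ) :
    |(∑ n ∈ Finset.range N,
        c n * (β / (β + ((x₁ - x1 n) ^ 2 + (x₂ + h - x2 n) ^ 2) / 2)) ^ α)
      - ∑ n ∈ Finset.range N,
          c n * (β / (β + ((x₁ - x1 n) ^ 2 + (x₂ - x2 n) ^ 2) / 2)) ^ α|
      ≤ (α / β) * δ * (∑ n ∈ Finset.range N, c n) * |h| := by
  calc _ ≤ α / β * δ * |h| * ∑ n ∈ Finset.range N, c n :=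
        abs_sum_mul_sub_sum_mul_le (Finset.range N) hc fun n hn =>
          abs_marginalizedKernel_halfSqDist_sub_le hα.le hβ (sq_nonneg (x₁ - x1 n))
            fun t ht => hx t ht n hn
    _ = _ := by ring

/-- Marginalized deviation bound (Theorem 2 of the paper): for the Gamma-marginalized GP
posterior mean `G(x₁, x₂) = Σₙ cₙ (β/(β + dₙ))^α` with
`dₙ = ((x₁ − x₁ⁿ)² + (x₂ − x₂ⁿ)²)/2` and nonnegative weights, if every point on the segment
from `x₂` to `x₂ + h` has second coordinate within `δ` of every training point's second
coordinate, then `|G(x₁, x₂ + h) − G(x₁, x₂)| ≤ (α/β) δ (Σₙ cₙ) |h|`. -/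
theorem marginalized_gp_mean_deviation_bound (α β δ : ℝ) (hα : 0 < α) (hβ : 0 < β)
    (hδ : 0 ≤ δ) (N : ℕ) (hN : 1 ≤ N) (c x1 x2 : ℕ → ℝ)
    (hc : ∀ n ∈ Finset.range N, 0 ≤ c n)
    (x₁ x₂ h : ℝ)
    (hx : ∀ x₂' ∈ Set.uIcc x₂ (x₂ + h), ∀ n ∈ Finset.range N, |x₂' - x2 n| ≤ δ) :
    |(∑ n ∈ Finset.range N,
        c n * (β / (β + ((x₁ - x1 n) ^ 2 + (x₂ + h - x2 n) ^ 2) / 2)) ^ α)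
      - ∑ n ∈ Finset.range N,
          c n * (β / (β + ((x₁ - x1 n) ^ 2 + (x₂ - x2 n) ^ 2) / 2)) ^ α|
      ≤ (α / β) * δ * (∑ n ∈ Finset.range N, c n) * |h| :=
  marginalized_gp_mean_deviation_bound_general α β δ hα hβ N c x1 x2 hc x₁ x₂ h hx
end
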